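/- (Deterministic form of Lemma 1.) If conditions A and B both hold, then every global minimizer β̃̂ of the gEN criterion L over ℝ^p satisfies sign(Σ^{-1/2}β̃̂) = sign(β*) componentwise. -/

import Mathlib

/-! In the coordinates `β = Σ^{-1/2} β̃` the gEN criterion is the elastic net
`‖y - Xβ‖² + λ‖β‖₁ + η βᵀΣβ`, which is strictly convex; hence any point satisfying its KKT
conditions is its unique minimizer. The oracle candidate `(β₁* + u, 0)`, where `u` solves
the stationarity equation on the support `𝒞₁₁ u = n^{-1/2} W(1) - (λ/2n) sign β₁* - (η/n) Σ₁₁ β₁*`,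
satisfies them: condition A gives `|u_j| < |β₁*_j|`, so the candidate has the signs of `β*` and
stationarity holds on the support, while off the support the gradient equals
`2√n (𝒞₂₁𝒞₁₁⁻¹W(1) - W(2)) - λ D` with `D` the vector in condition B, which therefore gives the dual
feasibility `|∂_j| ≤ λ`. -/

open Matrix

/-- squared Euclidean norm -/
noncomputable def norm2sq {m : ℕ} (v : Fin m → ℝ) : ℝ := ∑ i, (v i) ^ 2

/-- ℓ¹ norm -/
noncomputable def norm1 {m : ℕ} (v : Fin m → ℝ) : ℝ := ∑ i, |v i|

/-- sign function -/
noncomputable def sgn (x : ℝ) : ℝ := if 0 < x then 1 else if x < 0 then -1 else 0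

lemma sgn_mul_self (x : ℝ) : sgn x * x = |x| := by
  rcases lt_trichotomy x 0 with h | rfl | h
  · simp [sgn, h, h.not_gt, abs_of_neg h]
  · simp [sgn]
  · simp [sgn, h, abs_of_pos h]

lemma abs_sgn_le_one (x : ℝ) : |sgn x| ≤ 1 := by
  unfold sgn
  split_ifs <;> simp

lemma sgn_add_of_abs_lt {a u : ℝ} (h : |u| < |a|) : sgn (a + u) = sgn a := by
  rcases lt_trichotomy a 0 with ha | rfl | ha
  · rw [abs_of_neg ha] at h
    have hs : a + u < 0 := by linarith [le_abs_self u]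
    simp [sgn, ha, hs, ha.not_gt, hs.not_gt]
  · exact absurd h (by simp)
  · rw [abs_of_pos ha] at h
    have hs : 0 < a + u := by linarith [neg_abs_le u]
    simp [sgn, ha, hs]

theorem abs_sub_le_of_le_sub_mul {c a d lam : ℝ} (hc : 0 < c)
    (h : |a| ≤ lam / (2 * c) - lam / (2 * c) * |d|) (hlam : 0 ≤ lam) :
    |2 * c * a - lam * d| ≤ lam :=
  calc |2 * c * a - lam * d| ≤ 2 * c * |a| + lam * |d| := by
        refine (abs_sub _ _).trans_eq ?_
        rw [abs_mul (2 * c), abs_mul lam, abs_of_pos (by positivity : 0 < 2 * c),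
          abs_of_nonneg hlam]
    _ ≤ 2 * c * (lam / (2 * c) - lam / (2 * c) * |d|) + lam * |d| := by gcongr
    _ = lam := by field_simp; ring

theorem smul_inv_smul_add_div_smul {α : Type*} [AddCommGroup α] [Module ℝ α] {ν : ℝ}
    (hν : ν ≠ 0) (eta : ℝ) (A S : α) : ν • (ν⁻¹ • A + (eta / ν) • S) = A + eta • S := by
  rw [smul_add, smul_inv_smul₀ hν, smul_smul, mul_div_cancel₀ _ hν]

section ElasticNet

variable {m ι : Type*} [Fintype m] [Fintype ι]
  (X : Matrix m ι ℝ) (y : m → ℝ) (Sig : Matrix ι ι ℝ) (lam eta : ℝ)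

noncomputable def enCriterion (b : ι → ℝ) : ℝ :=
  (y - X *ᵥ b) ⬝ᵥ (y - X *ᵥ b) + lam * ∑ j, |b j| + eta * (b ⬝ᵥ Sig *ᵥ b)

noncomputable def enGradient (b : ι → ℝ) : ι → ℝ :=
  (2 : ℝ) • Xᵀ *ᵥ (X *ᵥ b - y) + (2 * eta) • Sig *ᵥ b

/-- The optimality condition `-enGradient b ∈ lam • ∂‖·‖₁ b`, coordinatewise. -/
def IsKKTPoint (b : ι → ℝ) : Prop :=
  ∀ j, |enGradient X y Sig eta b j| ≤ lam ∧
    enGradient X y Sig eta b j * b j = -(lam * |b j|)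

variable {Sig} in
theorem enCriterion_add (hSig : Sig.IsSymm) (b d : ι → ℝ) :
    enCriterion X y Sig lam eta (b + d) = enCriterion X y Sig lam eta b
      + ∑ j, (enGradient X y Sig eta b j * d j + lam * (|b j + d j| - |b j|))
      + (X *ᵥ d) ⬝ᵥ (X *ᵥ d) + eta * (d ⬝ᵥ Sig *ᵥ d) := by
  have hcross : d ⬝ᵥ Sig *ᵥ b = b ⬝ᵥ Sig *ᵥ d := by
    rw [dotProduct_mulVec, ← mulVec_transpose, hSig.eq, dotProduct_comm]
  have hgrad : ∑ j, enGradient X y Sig eta b j * d j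
      = 2 * ((X *ᵥ b - y) ⬝ᵥ X *ᵥ d) + 2 * eta * (b ⬝ᵥ Sig *ᵥ d) := by
    change enGradient X y Sig eta b ⬝ᵥ d = _
    rw [enGradient, add_dotProduct, smul_dotProduct, smul_dotProduct, mulVec_transpose,
      ← dotProduct_mulVec, dotProduct_comm (Sig *ᵥ b), hcross, smul_eq_mul, smul_eq_mul]
  simp only [enCriterion, Finset.sum_add_distrib, ← Finset.mul_sum, Finset.sum_sub_distrib,
    hgrad, Pi.add_apply, mulVec_add, dotProduct_add, add_dotProduct, sub_dotProduct,
    dotProduct_sub, hcross, dotProduct_comm (X *ᵥ d) (X *ᵥ b), dotProduct_comm (X *ᵥ d) y]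
  ring

lemma mul_add_abs_sub_abs_nonneg {g b d lam : ℝ} (hg : |g| ≤ lam) (hgb : g * b = -(lam * |b|)) :
    0 ≤ g * d + lam * (|b + d| - |b|) := by
  have h : -(lam * |b + d|) ≤ g * (b + d) :=
    calc -(lam * |b + d|) ≤ -(|g| * |b + d|) := by gcongr
      _ = -|g * (b + d)| := by rw [abs_mul]
      _ ≤ g * (b + d) := neg_abs_le _
  linarith

variable {X y Sig lam eta} in
theorem eq_of_isKKTPoint_of_forall_le (hSig : Sig.PosDef) (heta : 0 < eta) {a b₀ : ι → ℝ}
    (hb₀ : IsKKTPoint X y Sig lam eta b₀)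
    (ha : ∀ b, enCriterion X y Sig lam eta a ≤ enCriterion X y Sig lam eta b) : a = b₀ := by
  by_contra hne
  have hexp := enCriterion_add X y lam eta (isHermitian_iff_isSymm.mp hSig.isHermitian) b₀ (a - b₀)
  rw [add_sub_cancel] at hexp
  have hkkt : 0 ≤ ∑ j, (enGradient X y Sig eta b₀ j * (a - b₀) j
      + lam * (|b₀ j + (a - b₀) j| - |b₀ j|)) :=
    Finset.sum_nonneg fun j _ => mul_add_abs_sub_abs_nonneg (hb₀ j).1 (hb₀ j).2
  have hfit : 0 ≤ (X *ᵥ (a - b₀)) ⬝ᵥ (X *ᵥ (a - b₀)) := by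
    simpa using dotProduct_self_star_nonneg (X *ᵥ (a - b₀))
  have hpen : 0 < (a - b₀) ⬝ᵥ Sig *ᵥ (a - b₀) := by
    simpa using hSig.dotProduct_mulVec_pos (sub_ne_zero.mpr hne)
  nlinarith [ha b₀]

end ElasticNet

lemma norm2sq_eq_dotProduct {m : ℕ} (v : Fin m → ℝ) : norm2sq v = v ⬝ᵥ v := by
  simp only [norm2sq, dotProduct, sq]

theorem norm2sq_add_norm1_eq_enCriterion {n p : ℕ} (X : Matrix (Fin n) (Fin p) ℝ)
    (y : Fin n → ℝ) {R Sig : Matrix (Fin p) (Fin p) ℝ} (hRR : Rᵀ * R = Sig)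
    (hR : IsUnit R.det) (lam eta : ℝ) (bt : Fin p → ℝ) :
    norm2sq (fun i => y i - (X *ᵥ (R⁻¹ *ᵥ bt)) i) + lam * norm1 (R⁻¹ *ᵥ bt)
      + eta * norm2sq bt = enCriterion X y Sig lam eta (R⁻¹ *ᵥ bt) := by
  have hquad : R⁻¹ *ᵥ bt ⬝ᵥ Sig *ᵥ (R⁻¹ *ᵥ bt) = bt ⬝ᵥ bt := by
    have hcancel : R *ᵥ (R⁻¹ *ᵥ bt) = bt := by rw [mulVec_mulVec, mul_nonsing_inv R hR, one_mulVec]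
    rw [← hRR, ← mulVec_mulVec, hcancel, dotProduct_mulVec, vecMul_transpose, hcancel]
  rw [enCriterion, hquad, norm2sq_eq_dotProduct, norm2sq_eq_dotProduct, norm1]
  rfl

section Extension

variable {ι κ₁ κ₂ : Type*} (e : κ₁ ⊕ κ₂ ≃ ι)

def extendByZero (v : κ₁ → ℝ) : ι → ℝ := fun i => Sum.elim v 0 (e.symm i)

@[simp] lemma extendByZero_inl (v : κ₁ → ℝ) (k : κ₁) : extendByZero e v (e (Sum.inl k)) = v k := by
  simp [extendByZero]

@[simp] lemma extendByZero_inr (v : κ₁ → ℝ) (k : κ₂) : extendByZero e v (e (Sum.inr k)) = 0 := by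
  simp [extendByZero]

lemma mulVec_extendByZero [Fintype ι] [Fintype κ₁] [Fintype κ₂] {r : Type*}
    (M : Matrix r ι ℝ) (v : κ₁ → ℝ) :
    M *ᵥ extendByZero e v = M.submatrix id (e ∘ Sum.inl) *ᵥ v := by
  ext i
  simp [mulVec, dotProduct, ← e.sum_comp, Fintype.sum_sum_type]

end Extension

section Oracle

variable {m κ₁ κ₂ : Type*} [Fintype m] [Fintype κ₁]
  {X1 : Matrix m κ₁ ℝ} {ε : m → ℝ} {ν lam eta : ℝ} {S11 CC11 : Matrix κ₁ κ₁ ℝ}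
  {W1 β1 : κ₁ → ℝ}

noncomputable def blockGradient {κ : Type*} (A : Matrix m κ ℝ) (S : Matrix κ κ₁ ℝ)
    (X1 : Matrix m κ₁ ℝ) (ε : m → ℝ) (eta : ℝ) (β1 v : κ₁ → ℝ) : κ → ℝ :=
  (2 : ℝ) • Aᵀ *ᵥ (X1 *ᵥ v - ε) + (2 * eta) • S *ᵥ (β1 + v)

theorem blockGradient_eq {κ : Type*} {A : Matrix m κ ℝ} {S CC : Matrix κ κ₁ ℝ}
    {W : κ → ℝ} (hCC : ν • CC = Aᵀ * X1 + eta • S) (hW : √ν • W = Aᵀ *ᵥ ε) (v : κ₁ → ℝ) :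
    blockGradient A S X1 ε eta β1 v
      = (2 * ν) • CC *ᵥ v - (2 * √ν) • W + (2 * eta) • S *ᵥ β1 := by
  have hCCv : ν • CC *ᵥ v = Aᵀ *ᵥ X1 *ᵥ v + eta • S *ᵥ v := by
    rw [← smul_mulVec, hCC, add_mulVec, smul_mulVec, mulVec_mulVec]
  rw [blockGradient, mul_smul 2 ν, hCCv, mul_smul 2 √ν, hW, mulVec_sub, mulVec_add]
  module

variable [DecidableEq κ₁]

noncomputable def oracleError (ν lam eta : ℝ) (CC11 S11 : Matrix κ₁ κ₁ ℝ) (W1 β1 : κ₁ → ℝ) :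
    κ₁ → ℝ :=
  CC11⁻¹ *ᵥ ((√ν)⁻¹ • W1 - (lam / (2 * ν)) • (fun k => sgn (β1 k)) - (eta / ν) • S11 *ᵥ β1)

theorem abs_oracleError_lt (hν : 0 < ν) (hlam : 0 ≤ lam) (heta : 0 ≤ eta) {j : κ₁}
    (hA : |(CC11⁻¹ *ᵥ W1) j| < √ν * (|β1 j| - lam / (2 * ν) * |(CC11⁻¹ *ᵥ fun k => sgn (β1 k)) j|
      - eta / ν * |(CC11⁻¹ *ᵥ S11 *ᵥ β1) j|)) :
    |oracleError ν lam eta CC11 S11 W1 β1 j| < |β1 j| := by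
  have hsqrt : 0 < √ν := Real.sqrt_pos.mpr hν
  set a := (CC11⁻¹ *ᵥ W1) j
  set b := (CC11⁻¹ *ᵥ fun k => sgn (β1 k)) j
  set c := (CC11⁻¹ *ᵥ S11 *ᵥ β1) j
  have hu : oracleError ν lam eta CC11 S11 W1 β1 j
      = (√ν)⁻¹ * a - lam / (2 * ν) * b - eta / ν * c := by
    simp [oracleError, mulVec_sub, mulVec_smul, a, b, c]
  have ha : (√ν)⁻¹ * |a| < |β1 j| - lam / (2 * ν) * |b| - eta / ν * |c| := by
    rwa [inv_mul_lt_iff₀ hsqrt]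
  calc |oracleError ν lam eta CC11 S11 W1 β1 j|
      ≤ |(√ν)⁻¹ * a| + |lam / (2 * ν) * b| + |eta / ν * c| := by
        rw [hu]
        exact (abs_sub _ _).trans (by gcongr; exact abs_sub _ _)
    _ = (√ν)⁻¹ * |a| + lam / (2 * ν) * |b| + eta / ν * |c| := by
        rw [abs_mul, abs_mul, abs_mul, abs_of_pos (inv_pos.mpr hsqrt),
          abs_of_nonneg (by positivity : 0 ≤ lam / (2 * ν)),
          abs_of_nonneg (by positivity : 0 ≤ eta / ν)]
    _ < |β1 j| := by linarith

theorem blockGradient_oracleError (hν : 0 < ν) (hCC : IsUnit CC11.det)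
    (hCC11 : ν • CC11 = X1ᵀ * X1 + eta • S11) (hW1 : √ν • W1 = X1ᵀ *ᵥ ε) :
    blockGradient X1 S11 X1 ε eta β1 (oracleError ν lam eta CC11 S11 W1 β1)
      = -lam • fun k => sgn (β1 k) := by
  rw [blockGradient_eq hCC11 hW1, oracleError, mulVec_mulVec, mul_nonsing_inv _ hCC, one_mulVec]
  have hsqrt : √ν ^ 2 = ν := Real.sq_sqrt hν.le
  have hsqrt0 : √ν ≠ 0 := (Real.sqrt_pos.mpr hν).ne'
  ext k
  simp only [Pi.add_apply, Pi.sub_apply, Pi.smul_apply, smul_eq_mul]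
  field_simp
  linear_combination (-2 * W1 k) * hsqrt

theorem blockGradient_oracleError_compl {X2 : Matrix m κ₂ ℝ} {S21 CC21 : Matrix κ₂ κ₁ ℝ}
    {W2 : κ₂ → ℝ} (hν : 0 < ν) (hlam : lam ≠ 0) (hCC21 : ν • CC21 = X2ᵀ * X1 + eta • S21)
    (hW2 : √ν • W2 = X2ᵀ *ᵥ ε) :
    blockGradient X2 S21 X1 ε eta β1 (oracleError ν lam eta CC11 S11 W1 β1)
      = (2 * √ν) • ((CC21 * CC11⁻¹) *ᵥ W1 - W2)
        - lam • ((CC21 * CC11⁻¹) *ᵥ ((fun k => sgn (β1 k)) + (2 * eta / lam) • S11 *ᵥ β1)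
          - (2 * eta / lam) • S21 *ᵥ β1) := by
  rw [blockGradient_eq hCC21 hW2, oracleError, mulVec_mulVec]
  have hsqrt : √ν ^ 2 = ν := Real.sq_sqrt hν.le
  have hsqrt0 : √ν ≠ 0 := (Real.sqrt_pos.mpr hν).ne'
  set M := CC21 * CC11⁻¹
  ext k
  simp only [Pi.add_apply, Pi.sub_apply, Pi.smul_apply, smul_eq_mul, mulVec_sub, mulVec_add,
    mulVec_smul]
  field_simp
  linear_combination (-2 * (M *ᵥ W1) k) * hsqrt

end Oracle

theorem isUnit_det_of_smul_eq_transpose_mul_add {m κ : Type*} [Fintype m] [Fintype κ]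
    [DecidableEq κ] {A : Matrix m κ ℝ} {S C : Matrix κ κ ℝ} {ν eta : ℝ} (hS : S.PosDef)
    (hν : 0 < ν) (heta : 0 < eta) (hC : ν • C = Aᵀ * A + eta • S) : IsUnit C.det := by
  have hνC : (ν • C).PosDef := by
    rw [hC, ← conjTranspose_eq_transpose_of_trivial]
    exact PosDef.posSemidef_add (posSemidef_conjTranspose_mul_self A) (hS.smul heta)
  have hC' : C.PosDef := inv_smul_smul₀ hν.ne' C ▸ hνC.smul (inv_pos.mpr hν)
  exact (isUnit_iff_isUnit_det C).mp hC'.isUnit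

section Support

variable {m ι κ₁ κ₂ : Type*} [Fintype m] [Fintype ι] [Fintype κ₁] [Fintype κ₂]
  (e : κ₁ ⊕ κ₂ ≃ ι)

theorem enGradient_extendByZero_comp {κ : Type*} (r : κ → ι) (X : Matrix m ι ℝ)
    (Sig : Matrix ι ι ℝ) (eta : ℝ) (ε : m → ℝ) (β1 v : κ₁ → ℝ) :
    enGradient X (X *ᵥ extendByZero e β1 + ε) Sig eta (extendByZero e (β1 + v)) ∘ r
      = blockGradient (X.submatrix id r) (Sig.submatrix r (e ∘ Sum.inl))
          (X.submatrix id (e ∘ Sum.inl)) ε eta β1 v := by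
  have hres : X *ᵥ extendByZero e (β1 + v) - (X *ᵥ extendByZero e β1 + ε)
      = X.submatrix id (e ∘ Sum.inl) *ᵥ v - ε := by
    rw [mulVec_extendByZero, mulVec_extendByZero, mulVec_add]
    abel
  ext k
  simp only [Function.comp_apply, enGradient, blockGradient, hres, mulVec_extendByZero e Sig,
    Pi.add_apply, Pi.smul_apply]
  rfl

variable [DecidableEq κ₁] {X : Matrix m ι ℝ} {Sig : Matrix ι ι ℝ} {ε : m → ℝ} {β1 : κ₁ → ℝ}
  {ν lam eta : ℝ} {X1 : Matrix m κ₁ ℝ} {X2 : Matrix m κ₂ ℝ} {S11 CC11 : Matrix κ₁ κ₁ ℝ}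
  {S21 CC21 : Matrix κ₂ κ₁ ℝ} {W1 : κ₁ → ℝ} {W2 : κ₂ → ℝ}

theorem isKKTPoint_extendByZero_oracleError (hν : 0 < ν) (hlam : 0 < lam)
    (hX1 : X.submatrix id (e ∘ Sum.inl) = X1) (hX2 : X.submatrix id (e ∘ Sum.inr) = X2)
    (hS11 : Sig.submatrix (e ∘ Sum.inl) (e ∘ Sum.inl) = S11)
    (hS21 : Sig.submatrix (e ∘ Sum.inr) (e ∘ Sum.inl) = S21) (hCC : IsUnit CC11.det)
    (hCC11 : ν • CC11 = X1ᵀ * X1 + eta • S11) (hCC21 : ν • CC21 = X2ᵀ * X1 + eta • S21)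
    (hW1 : √ν • W1 = X1ᵀ *ᵥ ε) (hW2 : √ν • W2 = X2ᵀ *ᵥ ε)
    (hsgn : ∀ k, sgn (β1 k + oracleError ν lam eta CC11 S11 W1 β1 k) = sgn (β1 k))
    (hB : ∀ j, |((CC21 * CC11⁻¹) *ᵥ W1) j - W2 j| ≤ lam / (2 * √ν) - lam / (2 * √ν) *
      |((CC21 * CC11⁻¹) *ᵥ ((fun k => sgn (β1 k)) + (2 * eta / lam) • S11 *ᵥ β1)
        - (2 * eta / lam) • S21 *ᵥ β1) j|) :
    IsKKTPoint X (X *ᵥ extendByZero e β1 + ε) Sig lam eta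
      (extendByZero e (β1 + oracleError ν lam eta CC11 S11 W1 β1)) := by
  set u := oracleError ν lam eta CC11 S11 W1 β1
  intro i
  obtain ⟨k | k, rfl⟩ := e.surjective i
  · have hG := congrFun (enGradient_extendByZero_comp e (e ∘ Sum.inl) X Sig eta ε β1 u) k
    rw [hX1, hS11, blockGradient_oracleError hν hCC hCC11 hW1] at hG
    simp only [Function.comp_apply, Pi.smul_apply, smul_eq_mul] at hG
    rw [hG, extendByZero_inl, Pi.add_apply, abs_mul, abs_neg, abs_of_pos hlam]
    constructor
    · exact mul_le_of_le_one_right hlam.le (abs_sgn_le_one _)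
    · rw [← hsgn k, ← sgn_mul_self]
      ring
  · have hG := congrFun (enGradient_extendByZero_comp e (e ∘ Sum.inr) X Sig eta ε β1 u) k
    rw [hX2, hX1, hS21, blockGradient_oracleError_compl hν hlam.ne' hCC21 hW2] at hG
    simp only [Function.comp_apply, Pi.sub_apply, Pi.smul_apply, smul_eq_mul] at hG
    rw [hG, extendByZero_inr]
    exact ⟨abs_sub_le_of_le_sub_mul (Real.sqrt_pos.mpr hν) (hB k) hlam.le, by simp⟩

theorem sgn_eq_of_forall_enCriterion_le (hSig : Sig.PosDef) (hν : 0 < ν) (hlam : 0 < lam)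
    (heta : 0 < eta)
    (hX1 : X.submatrix id (e ∘ Sum.inl) = X1) (hX2 : X.submatrix id (e ∘ Sum.inr) = X2)
    (hS11 : Sig.submatrix (e ∘ Sum.inl) (e ∘ Sum.inl) = S11)
    (hS21 : Sig.submatrix (e ∘ Sum.inr) (e ∘ Sum.inl) = S21)
    (hCC11 : ν • CC11 = X1ᵀ * X1 + eta • S11) (hCC21 : ν • CC21 = X2ᵀ * X1 + eta • S21)
    (hW1 : √ν • W1 = X1ᵀ *ᵥ ε) (hW2 : √ν • W2 = X2ᵀ *ᵥ ε)
    (hA : ∀ j, |(CC11⁻¹ *ᵥ W1) j| < √ν * (|β1 j|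
      - lam / (2 * ν) * |(CC11⁻¹ *ᵥ fun k => sgn (β1 k)) j| - eta / ν * |(CC11⁻¹ *ᵥ S11 *ᵥ β1) j|))
    (hB : ∀ j, |((CC21 * CC11⁻¹) *ᵥ W1) j - W2 j| ≤ lam / (2 * √ν) - lam / (2 * √ν) *
      |((CC21 * CC11⁻¹) *ᵥ ((fun k => sgn (β1 k)) + (2 * eta / lam) • S11 *ᵥ β1)
        - (2 * eta / lam) • S21 *ᵥ β1) j|)
    {a : ι → ℝ} (ha : ∀ b, enCriterion X (X *ᵥ extendByZero e β1 + ε) Sig lam eta a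
      ≤ enCriterion X (X *ᵥ extendByZero e β1 + ε) Sig lam eta b) (i : ι) :
    sgn (a i) = sgn (extendByZero e β1 i) := by
  have hsgn k : sgn (β1 k + oracleError ν lam eta CC11 S11 W1 β1 k) = sgn (β1 k) :=
    sgn_add_of_abs_lt (abs_oracleError_lt hν hlam.le heta.le (hA k))
  have hCC : IsUnit CC11.det := isUnit_det_of_smul_eq_transpose_mul_add
    (hS11 ▸ hSig.submatrix (e.injective.comp Sum.inl_injective)) hν heta hCC11
  rw [eq_of_isKKTPoint_of_forall_le hSig heta (isKKTPoint_extendByZero_oracleError e hν hlam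
    hX1 hX2 hS11 hS21 hCC hCC11 hCC21 hW1 hW2 hsgn hB) ha]
  obtain ⟨k | k, rfl⟩ := e.surjective i
  · simp [hsgn]
  · simp

end Support

/-- Deterministic form of Lemma 1: if conditions A and B hold, then every global
    minimizer β̃̂ of the gEN criterion L satisfies sign(Σ^{-1/2}β̃̂) = sign(β*)
    componentwise. -/
theorem stmt7 (n p q : ℕ) (hn : 1 ≤ n) (hqp : q ≤ p)
    (X : Matrix (Fin n) (Fin p) ℝ) (eps : Fin n → ℝ)
    (betastar : Fin p → ℝ)
    (hbeta2 : ∀ j : Fin p, q ≤ (j : ℕ) → betastar j = 0)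
    (y : Fin n → ℝ) (hy : y = X.mulVec betastar + eps)
    (Sig : Matrix (Fin p) (Fin p) ℝ) (hSig : Sig.PosDef)
    -- R is the symmetric positive definite square root Σ^{1/2}, so Σ^{-1/2} = R⁻¹
    (R : Matrix (Fin p) (Fin p) ℝ) (hR : R.PosDef) (hRR : R * R = Sig)
    (lam eta : ℝ) (hlam : 0 < lam) (heta : 0 < eta)
    (L : (Fin p → ℝ) → ℝ)
    (hL : ∀ bt, L bt =
      norm2sq (fun i => y i - X.mulVec (R⁻¹.mulVec bt) i)
        + lam * norm1 (R⁻¹.mulVec bt) + eta * norm2sq bt)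
    (X1 : Matrix (Fin n) (Fin q) ℝ) (hX1 : X1 = X.submatrix id (Fin.castLE hqp))
    (X2 : Matrix (Fin n) (Fin (p - q)) ℝ)
    (hX2 : X2 = X.submatrix id
      (fun j => Fin.cast (by omega : q + (p - q) = p) (Fin.natAdd q j)))
    (Sig11 : Matrix (Fin q) (Fin q) ℝ)
    (hSig11 : Sig11 = Sig.submatrix (Fin.castLE hqp) (Fin.castLE hqp))
    (Sig21 : Matrix (Fin (p - q)) (Fin q) ℝ)
    (hSig21 : Sig21 = Sig.submatrix
      (fun j => Fin.cast (by omega : q + (p - q) = p) (Fin.natAdd q j)) (Fin.castLE hqp))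
    (beta1 : Fin q → ℝ) (hbeta1q : beta1 = fun j => betastar (Fin.castLE hqp j))
    (C11 : Matrix (Fin q) (Fin q) ℝ) (hC11 : C11 = ((n : ℝ)⁻¹) • (X1ᵀ * X1))
    (C21 : Matrix (Fin (p - q)) (Fin q) ℝ) (hC21 : C21 = ((n : ℝ)⁻¹) • (X2ᵀ * X1))
    (W1 : Fin q → ℝ) (hW1 : W1 = ((Real.sqrt n)⁻¹) • X1ᵀ.mulVec eps)
    (W2 : Fin (p - q) → ℝ) (hW2 : W2 = ((Real.sqrt n)⁻¹) • X2ᵀ.mulVec eps)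
    (CC11 : Matrix (Fin q) (Fin q) ℝ) (hCC11 : CC11 = C11 + (eta / n) • Sig11)
    (CC21 : Matrix (Fin (p - q)) (Fin q) ℝ) (hCC21 : CC21 = C21 + (eta / n) • Sig21)
    -- condition A
    (hA : ∀ j : Fin q,
      |CC11⁻¹.mulVec W1 j| < Real.sqrt n *
        (|beta1 j| - (lam / (2 * n)) * |(CC11⁻¹.mulVec fun k => sgn (beta1 k)) j|
          - (eta / n) * |CC11⁻¹.mulVec (Sig11.mulVec beta1) j|))
    -- condition B
    (hB : ∀ j : Fin (p - q),
      |(CC21 * CC11⁻¹).mulVec W1 j - W2 j| ≤ lam / (2 * Real.sqrt n)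
        - (lam / (2 * Real.sqrt n)) *
          |((CC21 * CC11⁻¹).mulVec
              ((fun k => sgn (beta1 k)) + (2 * eta / lam) • Sig11.mulVec beta1)
            - (2 * eta / lam) • Sig21.mulVec beta1) j|)
    -- β̃̂ is a global minimizer of L
    (bthat : Fin p → ℝ) (hmin : ∀ b : Fin p → ℝ, L bthat ≤ L b) :
    ∀ j : Fin p, sgn (R⁻¹.mulVec bthat j) = sgn (betastar j) := by
  have hn0 : (0 : ℝ) < n := by exact_mod_cast hn
  have hsqrt : Real.sqrt n ≠ 0 := (Real.sqrt_pos.mpr hn0).ne'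
  have hpq : q + (p - q) = p := by omega
  set e : Fin q ⊕ Fin (p - q) ≃ Fin p := finSumFinEquiv.trans (finCongr hpq)
  have hβ : betastar = extendByZero e beta1 := by
    funext i
    obtain ⟨k | k, rfl⟩ := e.surjective i
    · rw [extendByZero_inl, hbeta1q]
      rfl
    · rw [extendByZero_inr]
      exact hbeta2 _ (Nat.le_add_right q k)
  have hRdet : IsUnit R.det := (isUnit_iff_isUnit_det R).mp hR.isUnit
  have hRR' : Rᵀ * R = Sig := by rw [(isHermitian_iff_isSymm.mp hR.isHermitian).eq, hRR]
  have hminβ : ∀ b, enCriterion X (X *ᵥ extendByZero e beta1 + eps) Sig lam eta (R⁻¹ *ᵥ bthat)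
      ≤ enCriterion X (X *ᵥ extendByZero e beta1 + eps) Sig lam eta b := by
    intro b
    have h := hmin (R *ᵥ b)
    rwa [hL, hL, norm2sq_add_norm1_eq_enCriterion X y hRR' hRdet,
      norm2sq_add_norm1_eq_enCriterion X y hRR' hRdet, mulVec_mulVec, nonsing_inv_mul R hRdet,
      one_mulVec, hy, hβ] at h
  intro j
  rw [hβ]
  refine sgn_eq_of_forall_enCriterion_le e hSig hn0 hlam heta hX1.symm hX2.symm hSig11.symm
    hSig21.symm ?_ ?_ ?_ ?_ hA hB hminβ j
  · rw [hCC11, hC11, smul_inv_smul_add_div_smul hn0.ne']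
  · rw [hCC21, hC21, smul_inv_smul_add_div_smul hn0.ne']
  · rw [hW1, smul_inv_smul₀ hsqrt]
  · rw [hW2, smul_inv_smul₀ hsqrt]
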